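/- For all integers N ≥ 1 and k ≥ 1, in the Pólya urn model with N colours and k draws, the probability that every colour is drawn at least twice satisfies P(X_i ≥ 2 for all i ∈ {1,…,N}) ≥ 1 − 2N²/k. (This is the quantitative content of the statement that the random core T̃(K,k), obtained from a kernel K with N edges by randomly subdividing its edges with k vertices, is 2-simple—every kernel edge receives at least two subdivision vertices—with probability at least 1 − 2N²/k.) -/

import Mathlib

attribute [local instance] Classical.propDecidable

/-- The set of colour-count vectors of the Pólya urn with `N` colours and `k` draws:
all `(v_1, …, v_N) ∈ ℤ_{≥0}^N` with `v_1 + ⋯ + v_N = k`.  The colour-count vector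
`(X_1, …, X_N)` is uniformly distributed on this set. -/
def urnSet (N k : ℕ) : Finset (Fin N → ℕ) :=
  (Fintype.piFinset fun _ => Finset.range (k + 1)).filter fun v => ∑ i, v i = k

lemma mem_urnSet {N k : ℕ} {v : Fin N → ℕ} : v ∈ urnSet N k ↔ ∑ i, v i = k := by
  simp only [urnSet, Finset.mem_filter, Fintype.mem_piFinset, Finset.mem_range]
  constructor
  · exact fun h => h.2
  · intro h
    refine ⟨fun i => ?_, h⟩
    have := Finset.single_le_sum (f := v) (fun j _ => Nat.zero_le _) (Finset.mem_univ i)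
    omega

lemma card_slice (N k c : ℕ) (i : Fin (N + 1)) (hc : c ≤ k) :
    ((urnSet (N + 1) k).filter (fun v => v i = c)).card = (urnSet N (k - c)).card := by
  apply Finset.card_bij (fun v _ => i.removeNth v)
  · intro v hv
    simp only [Finset.mem_filter, mem_urnSet] at hv
    rw [mem_urnSet]
    have h := Fin.sum_univ_succAbove v i
    have : ∑ j, i.removeNth v j = ∑ j : Fin N, v (i.succAbove j) := rfl
    omega
  · intro v hv w hw h
    simp only [Finset.mem_filter] at hv hw
    rw [← Fin.insertNth_self_removeNth i v, ← Fin.insertNth_self_removeNth i w, hv.2, hw.2, h]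
  · intro w hw
    refine ⟨Fin.insertNth (α := fun _ => ℕ) i c w, ?_, ?_⟩
    · rw [mem_urnSet] at hw
      simp only [Finset.mem_filter, mem_urnSet]
      constructor
      · rw [Fin.sum_univ_succAbove _ i, Fin.insertNth_apply_same]
        simp [Fin.insertNth_apply_succAbove]
        omega
      · exact Fin.insertNth_apply_same (α := fun _ => ℕ) i c w
    · simp [Fin.removeNth_insertNth]

lemma card_urnSet : ∀ N k : ℕ, (urnSet (N + 1) k).card = (k + N).choose N := by
  intro N
  induction N with
  | zero =>
    intro k
    have h1 : urnSet 1 k = {fun _ => k} := by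
      ext v
      simp only [mem_urnSet, Finset.mem_singleton, Fin.sum_univ_one]
      constructor
      · intro h; funext i; rw [Subsingleton.elim i 0]; exact h
      · intro h; rw [h]
    rw [h1]; simp
  | succ N ih =>
    intro k
    show (urnSet (N + 2) k).card = (k + (N + 1)).choose (N + 1)
    calc (urnSet (N + 2) k).card
        = ∑ c ∈ Finset.range (k + 1),
            ((urnSet (N + 2) k).filter (fun v => v (Fin.last (N + 1)) = c)).card := by
          apply Finset.card_eq_sum_card_fiberwise
          intro v hv
          rw [Finset.mem_coe, mem_urnSet] at hv
          simp only [Finset.mem_coe, Finset.mem_range]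
          have := Finset.single_le_sum (f := v) (fun j _ => Nat.zero_le _)
            (Finset.mem_univ (Fin.last (N + 1)))
          omega
      _ = ∑ c ∈ Finset.range (k + 1), ((k - c) + N).choose N := by
          refine Finset.sum_congr rfl (fun c hc => ?_)
          rw [Finset.mem_range] at hc
          rw [card_slice (N + 1) k c (Fin.last (N + 1)) (by omega : c ≤ k), ih]
      _ = ∑ c ∈ Finset.range (k + 1), (c + N).choose N := by
          have h := Finset.sum_range_reflect (fun c => (c + N).choose N) (k + 1)
          simpa using h
      _ = ∑ m ∈ Finset.Icc N (k + N), m.choose N := by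
          rw [← Finset.Ico_add_one_right_eq_Icc, Finset.sum_Ico_eq_sum_range]
          have h : k + N + 1 - N = k + 1 := by omega
          rw [h]
          exact Finset.sum_congr rfl (fun c _ => by rw [Nat.add_comm])
      _ = (k + N + 1).choose (N + 1) := Nat.sum_Icc_choose _ _
      _ = (k + (N + 1)).choose (N + 1) := by rw [Nat.add_assoc]

/-- The probability, in the Pólya urn model with `N` colours and `k` draws, that the
colour-count vector `(X_1, …, X_N)` satisfies the predicate `p`, expressed as a
counting ratio over the uniform distribution on `urnSet N k`. -/
noncomputable def urnProb (N k : ℕ) (p : (Fin N → ℕ) → Prop) : ℝ :=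
  ((urnSet N k).filter p).card / (urnSet N k).card

lemma bad_bound (M k : ℕ) (hk : 1 ≤ k) :
    k * ((urnSet (M + 1 + 1) k).filter (fun v => ¬∀ i, 2 ≤ v i)).card ≤
      2 * (M + 1 + 1) ^ 2 * (urnSet (M + 1 + 1) k).card := by
  set C := (k + M).choose M with hC
  have hslice : ∀ (i : Fin (M + 1 + 1)) (c : ℕ), c ≤ k →
      ((urnSet (M + 1 + 1) k).filter (fun v => v i = c)).card = ((k - c) + M).choose M := by
    intro i c hc
    rw [card_slice (M + 1) k c i hc, card_urnSet]
  have hBi : ∀ i : Fin (M + 1 + 1),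
      ((urnSet (M + 1 + 1) k).filter (fun v => v i ≤ 1)).card ≤ 2 * C := by
    intro i
    have hsub : (urnSet (M + 1 + 1) k).filter (fun v => v i ≤ 1) ⊆
        ((urnSet (M + 1 + 1) k).filter (fun v => v i = 0)) ∪
          ((urnSet (M + 1 + 1) k).filter (fun v => v i = 1)) := by
      intro v hv
      rw [Finset.mem_filter] at hv
      rw [Finset.mem_union, Finset.mem_filter, Finset.mem_filter]
      have h01 : v i = 0 ∨ v i = 1 := by clear * - hv; omega
      rcases h01 with h | h
      · exact Or.inl ⟨hv.1, h⟩
      · exact Or.inr ⟨hv.1, h⟩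
    have h0 : ((urnSet (M + 1 + 1) k).filter (fun v => v i = 0)).card = C := by
      rw [hslice i 0 (Nat.zero_le k), Nat.sub_zero]
    have h1 : ((urnSet (M + 1 + 1) k).filter (fun v => v i = 1)).card ≤ C := by
      rw [hslice i 1 hk]
      exact Nat.choose_le_choose M (Nat.add_le_add_right (Nat.sub_le k 1) M)
    calc ((urnSet (M + 1 + 1) k).filter (fun v => v i ≤ 1)).card
        ≤ (((urnSet (M + 1 + 1) k).filter (fun v => v i = 0)) ∪
            ((urnSet (M + 1 + 1) k).filter (fun v => v i = 1))).card :=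
          Finset.card_le_card hsub
      _ ≤ ((urnSet (M + 1 + 1) k).filter (fun v => v i = 0)).card +
            ((urnSet (M + 1 + 1) k).filter (fun v => v i = 1)).card :=
          Finset.card_union_le _ _
      _ ≤ 2 * C := by rw [h0, two_mul]; exact Nat.add_le_add_left h1 C
  have hsubB : (urnSet (M + 1 + 1) k).filter (fun v => ¬∀ i, 2 ≤ v i) ⊆
      Finset.univ.biUnion (fun i : Fin (M + 1 + 1) =>
        (urnSet (M + 1 + 1) k).filter (fun v => v i ≤ 1)) := by
    intro v hv
    rw [Finset.mem_filter] at hv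
    push_neg at hv
    obtain ⟨i, hi⟩ := hv.2
    rw [Finset.mem_biUnion]
    exact ⟨i, Finset.mem_univ i, Finset.mem_filter.mpr ⟨hv.1, by omega⟩⟩
  have hB : ((urnSet (M + 1 + 1) k).filter (fun v => ¬∀ i, 2 ≤ v i)).card ≤
      (M + 1 + 1) * (2 * C) := by
    calc ((urnSet (M + 1 + 1) k).filter (fun v => ¬∀ i, 2 ≤ v i)).card
        ≤ ∑ i : Fin (M + 1 + 1), ((urnSet (M + 1 + 1) k).filter (fun v => v i ≤ 1)).card :=
          (Finset.card_le_card hsubB).trans (Finset.card_biUnion_le)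
      _ ≤ ∑ _i : Fin (M + 1 + 1), 2 * C := Finset.sum_le_sum (fun i _ => hBi i)
      _ = (M + 1 + 1) * (2 * C) := by
          rw [Finset.sum_const, Finset.card_univ, Fintype.card_fin, smul_eq_mul]
  have hT : (urnSet (M + 1 + 1) k).card = (k + M + 1).choose (M + 1) := by
    rw [card_urnSet, Nat.add_assoc]
  have hkey : k * C ≤ (M + 1 + 1) * (urnSet (M + 1 + 1) k).card := by
    have hid := Nat.add_one_mul_choose_eq (k + M) M
    rw [hT]
    calc k * C ≤ (k + M + 1) * C := Nat.mul_le_mul_right C (by clear * -; omega)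
      _ = (k + M + 1).choose (M + 1) * (M + 1) := hid
      _ ≤ (M + 1 + 1) * (k + M + 1).choose (M + 1) := by
          rw [Nat.mul_comm]
          exact Nat.mul_le_mul_right _ (Nat.le_succ _)
  calc k * ((urnSet (M + 1 + 1) k).filter (fun v => ¬∀ i, 2 ≤ v i)).card
      ≤ k * ((M + 1 + 1) * (2 * C)) := Nat.mul_le_mul_left k hB
    _ = 2 * (M + 1 + 1) * (k * C) := by ring
    _ ≤ 2 * (M + 1 + 1) * ((M + 1 + 1) * (urnSet (M + 1 + 1) k).card) :=
        Nat.mul_le_mul_left _ hkey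
    _ = 2 * (M + 1 + 1) ^ 2 * (urnSet (M + 1 + 1) k).card := by ring

theorem polya_all_colours_at_least_twice (N k : ℕ) (hN : 1 ≤ N) (hk : 1 ≤ k) :
    1 - 2 * (N : ℝ) ^ 2 / k ≤ urnProb N k (fun v => ∀ i, 2 ≤ v i) := by
  have hkpos : (0 : ℝ) < k := by exact_mod_cast hk
  have hprob0 : (0 : ℝ) ≤ urnProb N k (fun v => ∀ i, 2 ≤ v i) :=
    div_nonneg (Nat.cast_nonneg _) (Nat.cast_nonneg _)
  by_cases hbig : k ≤ 2 * N ^ 2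
  · have h1 : (1 : ℝ) ≤ 2 * (N : ℝ) ^ 2 / k := by
      rw [le_div_iff₀ hkpos]
      have : (k : ℝ) ≤ 2 * (N : ℝ) ^ 2 := by exact_mod_cast hbig
      linarith
    linarith
  · push_neg at hbig
    obtain ⟨M, rfl⟩ : ∃ M, N = M + 1 := ⟨N - 1, by omega⟩
    have hnat : k * ((urnSet (M + 1) k).filter (fun v => ¬∀ i, 2 ≤ v i)).card ≤
        2 * (M + 1) ^ 2 * (urnSet (M + 1) k).card := by
      rcases M with _ | M
      · -- N = 1 : the bad set is empty since k ≥ 3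
        have hempty : (urnSet 1 k).filter (fun v => ¬∀ i, 2 ≤ v i) = ∅ := by
          rw [Finset.filter_eq_empty_iff]
          intro v hv
          rw [mem_urnSet, Fin.sum_univ_one] at hv
          push_neg
          intro i
          rw [Subsingleton.elim i 0]
          omega
        rw [hempty]
        simp
      · exact bad_bound M k hk
    -- positivity of the total count
    have hTpos : 0 < (urnSet (M + 1) k).card := by
      rw [card_urnSet]
      exact Nat.choose_pos (Nat.le_add_left M k)
    set T := (urnSet (M + 1) k).card with hTdef
    set G := ((urnSet (M + 1) k).filter (fun v => ∀ i, 2 ≤ v i)).card with hGdef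
    set B := ((urnSet (M + 1) k).filter (fun v => ¬∀ i, 2 ≤ v i)).card with hBdef
    have hGB : G + B = T := by
      rw [hGdef, hBdef, hTdef, ← Finset.card_union_of_disjoint
        (Finset.disjoint_filter_filter_not _ _ _), Finset.filter_union_filter_not_eq]
    have hTpos' : (0 : ℝ) < T := by exact_mod_cast hTpos
    have hcast : (G : ℝ) = T - B := by
      have : (G : ℝ) + B = T := by exact_mod_cast hGB
      linarith
    have hBk : (B : ℝ) * k ≤ 2 * ((M : ℝ) + 1) ^ 2 * T := by
      have : ((k * B : ℕ) : ℝ) ≤ ((2 * (M + 1) ^ 2 * T : ℕ) : ℝ) := by exact_mod_cast hnat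
      push_cast at this
      linarith
    have hmain : 1 - 2 * ((M : ℝ) + 1) ^ 2 / k ≤ (G : ℝ) / T := by
      rw [hcast, le_div_iff₀ hTpos', sub_mul, one_mul, div_mul_eq_mul_div, sub_le_sub_iff_left,
        le_div_iff₀ hkpos]
      exact hBk
    rw [show ((M : ℝ) + 1) = ((M + 1 : ℕ) : ℝ) by push_cast; ring] at hmain
    rw [hGdef, hTdef] at hmain
    unfold urnProb
    convert hmain using 4
    exact Finset.filter_congr_decidable _ _ _
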